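/- arXiv:1506.04534 — 3 statements merged into one kernel-verified Lean document; each statement's English description precedes it below -/
import Mathlib

section
/- Let K ≥ 0 and let f : ℝ → ℝ be K-Lipschitz. If limsup_{n→∞} f(4·(log n)²)/log n ≤ 1 (the limsup taken over natural numbers n ≥ 2), then limsup_{t→∞} f(t)/√(t/4) ≤ 1. -/
open Filter

/-!
Write `τ n = 4 (log n)²`. Every large `t` lies in a window `[τ n, τ (n + 1))`, and these windows
have length at most `8`. On a window the Lipschitz bound gives `f t ≤ f (τ n) + 8 K`, the sampled
bound gives `f (τ n) ≤ c log n ≤ c √(t / 4)` for any `c > 1` and large `n`, and the additive error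
`8 K` is negligible against `√(t / 4) → ∞`.
-/

theorem EReal.limsup_coe_le_coe_iff {α : Type*} {l : Filter α} {u : α → ℝ} {a : ℝ} :
    limsup (fun x => (u x : EReal)) l ≤ a ↔ ∀ b > a, ∀ᶠ x in l, u x ≤ b := by
  rw [limsup_le_iff']
  refine ⟨fun h b hab => (h b (EReal.coe_lt_coe_iff.2 hab)).mono fun _ => EReal.coe_le_coe_iff.1,
    fun h y hy => ?_⟩
  obtain ⟨b, hab, hby⟩ := EReal.lt_iff_exists_real_btwn.1 hy
  exact (h b (EReal.coe_lt_coe_iff.1 hab)).mono fun _ hx => (EReal.coe_le_coe_iff.2 hx).trans hby.le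

theorem Filter.Tendsto.exists_le_lt_succ {τ : ℕ → ℝ} (hτ : Tendsto τ atTop atTop) {N : ℕ} {t : ℝ}
    (ht : τ N ≤ t) : ∃ n ≥ N, τ n ≤ t ∧ t < τ (n + 1) := by
  classical
  have hex : ∃ m, ∀ k ≥ m, t < τ k := eventually_atTop.1 (hτ.eventually_gt_atTop t)
  have hNm : N < Nat.find hex := by
    by_contra! h
    exact (Nat.find_spec hex N h).not_ge ht
  obtain ⟨n, hn, hnt⟩ : ∃ n ≥ Nat.find hex - 1, τ n ≤ t := by
    have := Nat.find_min hex (show Nat.find hex - 1 < Nat.find hex by omega)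
    push Not at this
    exact this
  obtain rfl : n = Nat.find hex - 1 := by
    by_contra hne
    exact (Nat.find_spec hex n (by omega)).not_ge hnt
  exact ⟨_, by omega, hnt, Nat.find_spec hex _ (by omega)⟩

theorem LipschitzWith.eventually_le_mul_of_eventually_le_mul_comp {K : NNReal} {f : ℝ → ℝ}
    (hf : LipschitzWith K f) {τ : ℕ → ℝ} {g : ℝ → ℝ} {D c c' : ℝ} (hτ : Tendsto τ atTop atTop)
    (hgap : ∀ᶠ n in atTop, τ (n + 1) - τ n ≤ D) (hg_mono : Monotone g)
    (hg : Tendsto g atTop atTop) (hc : 0 ≤ c) (hcc' : c < c')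
    (hsample : ∀ᶠ n in atTop, f (τ n) ≤ c * g (τ n)) :
    ∀ᶠ t in atTop, f t ≤ c' * g t := by
  obtain ⟨N, hN⟩ := eventually_atTop.1 (hgap.and hsample)
  have hslack : ∀ᶠ t in atTop, K * D ≤ (c' - c) * g t :=
    (hg.const_mul_atTop (sub_pos.2 hcc')).eventually_ge_atTop _
  filter_upwards [eventually_ge_atTop (τ N), hslack] with t htN ht
  obtain ⟨n, hnN, hnt, htn⟩ := hτ.exists_le_lt_succ htN
  obtain ⟨hgap_n, hsample_n⟩ := hN n hnN
  have hlip : f t - f (τ n) ≤ K * (t - τ n) := by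
    have := (le_abs_self _).trans (hf.dist_le_mul t (τ n))
    rwa [Real.dist_eq, abs_of_nonneg (sub_nonneg.2 hnt)] at this
  calc f t ≤ f (τ n) + K * D := by
        linarith [mul_le_mul_of_nonneg_left (show t - τ n ≤ D by linarith) K.coe_nonneg]
    _ ≤ c * g t + K * D := by linarith [mul_le_mul_of_nonneg_left (hg_mono hnt) hc]
    _ ≤ c' * g t := by linarith

namespace Real

theorem log_add_one_sq_sub_log_sq_le {x : ℝ} (hx : 1 ≤ x) :
    log (x + 1) ^ 2 - log x ^ 2 ≤ 2 := by
  have hx0 : 0 < x := by linarith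
  have hmono : log x ≤ log (x + 1) := log_le_log hx0 (by linarith)
  have hsmall : log (x + 1) ≤ x := by
    simpa using log_le_sub_one_of_pos (x := x + 1) (by linarith)
  have hdiff : log (x + 1) - log x ≤ 1 / x := by
    rw [← log_div (by linarith) hx0.ne']
    calc _ ≤ (x + 1) / x - 1 := log_le_sub_one_of_pos (by positivity)
      _ = 1 / x := by field_simp; ring
  calc log (x + 1) ^ 2 - log x ^ 2
        = (log (x + 1) - log x) * (log (x + 1) + log x) := by ring
    _ ≤ 1 / x * (2 * x) :=
        mul_le_mul hdiff (by linarith) (by linarith [log_nonneg hx]) (by positivity)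
    _ = 2 := by field_simp

end Real

/-- **Sampling/continuity step.** If `f : ℝ → ℝ` is `K`-Lipschitz (with `K ≥ 0`) and the
limsup over natural numbers `n` of `f (4·(log n)²) / log n` is at most `1`, then
`limsup_{t→∞} f t / √(t/4) ≤ 1`. -/
theorem limsup_sampled_implies_limsup_continuous
    (K : NNReal) (f : ℝ → ℝ) (hf : LipschitzWith K f)
    (hsample :
      Filter.limsup
        (fun n : ℕ => ((f (4 * (Real.log n) ^ 2) / Real.log n : ℝ) : EReal))
        Filter.atTop ≤ (1 : EReal)) :
    Filter.limsup (fun t : ℝ => ((f t / Real.sqrt (t / 4) : ℝ) : EReal))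
      Filter.atTop ≤ (1 : EReal) := by
  set τ : ℕ → ℝ := fun n => 4 * Real.log n ^ 2
  have hτ : Tendsto τ atTop atTop := ((tendsto_pow_atTop two_ne_zero).comp
    (Real.tendsto_log_atTop.comp tendsto_natCast_atTop_atTop)).const_mul_atTop four_pos
  have hgap : ∀ᶠ n in atTop, τ (n + 1) - τ n ≤ 8 := by
    filter_upwards [eventually_ge_atTop 1] with n hn
    have := Real.log_add_one_sq_sub_log_sq_le (x := n) (by exact_mod_cast hn)
    simp only [τ, Nat.cast_add, Nat.cast_one]
    linarith
  have hsqrt_τ (n : ℕ) : √(τ n / 4) = Real.log n := by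
    simp [τ, Real.sqrt_sq (Real.log_natCast_nonneg n)]
  have hg : Tendsto (fun t => √(t / 4)) atTop atTop :=
    Real.tendsto_sqrt_atTop.comp (tendsto_id.atTop_div_const four_pos)
  have hg_mono : Monotone fun t : ℝ => √(t / 4) := fun s t hst => Real.sqrt_le_sqrt (by linarith)
  rw [← EReal.coe_one, EReal.limsup_coe_le_coe_iff] at hsample ⊢
  intro b hb
  obtain ⟨c, hc1, hcb⟩ := exists_between hb
  have hsample_c : ∀ᶠ n in atTop, f (τ n) ≤ c * √(τ n / 4) := by
    filter_upwards [hsample c hc1, eventually_gt_atTop 1] with n hn hn1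
    rwa [hsqrt_τ, ← div_le_iff₀ (Real.log_pos (by exact_mod_cast hn1))]
  filter_upwards [hf.eventually_le_mul_of_eventually_le_mul_comp hτ hgap hg_mono hg (by linarith)
    hcb hsample_c, hg.eventually_gt_atTop 0] with t ht hpos
  exact (div_le_iff₀ hpos).2 ht
end

section
/- Let (Ω, F, μ) be a probability space, let (T_t)_{t∈ℝ} be a family of measure-preserving measurable maps T_t : Ω → Ω, and let Y : Ω → ℝ be measurable. Suppose there exist C > 0 and r₀ > 0 such that μ{ω : Y(ω) > r} ≤ C·e^{−r}/r for all r ≥ r₀, and suppose there is K ≥ 0 such that for every ω ∈ Ω the function t ↦ Y(T_t ω) is K-Lipschitz on ℝ. Then for μ-almost every ω ∈ Ω, limsup_{t→∞} Y(T_t ω)/√(t/4) ≤ 1. -/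
open MeasureTheory Filter Real
open scoped ENNReal NNReal Topology

/-! Since each `T n` preserves `μ`, `μ {Y ∘ T n > √(n/4)} ≤ μ {Y > √(n/4)} = O(n⁻²)` by the
exponential tail, so by Borel–Cantelli almost every `ω` has `Y (T n ω) ≤ √(n/4)` for all large
integers `n`. Lipschitz continuity in `t` passes this to real times at the cost of an additive `K`,
which disappears after dividing by `√(t/4) → ∞`. -/

lemma ENNReal.tsum_ne_top_of_eventually_le_ofReal {f : ℕ → ℝ≥0∞} (hf : ∀ n, f n ≠ ∞)
    {g : ℕ → ℝ} (hg : Summable g) (hg₀ : 0 ≤ g) (h : ∀ᶠ n in atTop, f n ≤ ENNReal.ofReal (g n)) :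
    ∑' n, f n ≠ ∞ := by
  have hsum : Summable fun n => (f n).toReal :=
    hg.of_norm_bounded_eventually_nat <| h.mono fun n hn => by
      simpa only [Real.norm_eq_abs, abs_of_nonneg ENNReal.toReal_nonneg]
        using ENNReal.toReal_le_of_le_ofReal (hg₀ n) hn
  simpa only [ENNReal.ofReal_toReal (hf _)] using hsum.tsum_ofReal_ne_top

lemma mul_exp_neg_div_le {C r₀ r : ℝ} (hC : 0 ≤ C) (hr₀ : 0 < r₀) (hr : r₀ ≤ r) :
    C * exp (-r) / r ≤ 24 * C / r₀ * (r ^ 4)⁻¹ := by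
  have hr0 : 0 < r := hr₀.trans_le hr
  have hexp : exp (-r) ≤ 24 * (r ^ 4)⁻¹ := by
    have : r ^ 4 / 24 ≤ exp r := by
      simpa [Nat.factorial] using pow_div_factorial_le_exp r hr0.le 4
    calc exp (-r) = (exp r)⁻¹ := exp_neg r
      _ ≤ (r ^ 4 / 24)⁻¹ := inv_anti₀ (by positivity) this
      _ = 24 * (r ^ 4)⁻¹ := by ring
  calc C * exp (-r) / r ≤ C * (24 * (r ^ 4)⁻¹) / r₀ := by gcongr
    _ = 24 * C / r₀ * (r ^ 4)⁻¹ := by ring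

lemma tsum_measure_gt_sqrt_ne_top {Ω : Type*} [MeasurableSpace Ω] (μ : Measure Ω)
    [IsFiniteMeasure μ] (Y : Ω → ℝ) {C r₀ : ℝ} (hC : 0 ≤ C) (hr₀ : 0 < r₀)
    (htail : ∀ r : ℝ, r₀ ≤ r → μ {ω | Y ω > r} ≤ ENNReal.ofReal (C * exp (-r) / r)) :
    ∑' n : ℕ, μ {ω | Y ω > √(n / 4)} ≠ ∞ := by
  refine ENNReal.tsum_ne_top_of_eventually_le_ofReal (fun _ => measure_ne_top μ _)
    ((summable_nat_pow_inv.2 one_lt_two).mul_left (384 * C / r₀))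
    (fun n => by positivity) ?_
  have hsqrt : Tendsto (fun n : ℕ => √(n / 4)) atTop atTop :=
    tendsto_sqrt_atTop.comp <| (tendsto_natCast_atTop_atTop).atTop_div_const (by norm_num)
  filter_upwards [hsqrt.eventually_ge_atTop r₀] with n hn
  refine (htail _ hn).trans <| ENNReal.ofReal_le_ofReal <|
    (mul_exp_neg_div_le hC hr₀ hn).trans_eq ?_
  have : √(n / 4 : ℝ) ^ 4 = ((n : ℝ) / 4) ^ 2 := by
    rw [show 4 = 2 * 2 by rfl, pow_mul, sq_sqrt (by positivity)]
  rw [this]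
  ring

lemma ae_eventually_comp_le_of_tsum_ne_top {Ω : Type*} [MeasurableSpace Ω]
    {μ : Measure Ω} {T : ℕ → Ω → Ω} (hT : ∀ n, MeasurePreserving (T n) μ μ) {Y : Ω → ℝ}
    {a : ℕ → ℝ} (h : ∑' n, μ {ω | Y ω > a n} ≠ ∞) :
    ∀ᵐ ω ∂μ, ∀ᶠ n in atTop, Y (T n ω) ≤ a n := by
  have hsum : ∑' n, μ (T n ⁻¹' {ω | Y ω > a n}) ≠ ∞ :=
    ne_top_of_le_ne_top h <| ENNReal.tsum_le_tsum fun n => (hT n).measure_preimage_le _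
  filter_upwards [ae_eventually_notMem hsum] with ω hω
  exact hω.mono fun n hn => not_lt.1 hn

lemma LipschitzWith.eventually_le_add_of_eventually_le_nat {f g : ℝ → ℝ} {K : ℝ≥0}
    (hf : LipschitzWith K f) (hg : Monotone g) (h : ∀ᶠ n : ℕ in atTop, f n ≤ g n) :
    ∀ᶠ t in atTop, f t ≤ g t + K := by
  obtain ⟨N, hN⟩ := eventually_atTop.1 h
  filter_upwards [eventually_ge_atTop (N : ℝ)] with t ht
  have ht₀ : 0 ≤ t := (Nat.cast_nonneg N).trans ht
  have hdist : dist t ⌊t⌋₊ ≤ 1 := by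
    rw [Real.dist_eq, abs_of_nonneg (sub_nonneg.2 (Nat.floor_le ht₀))]
    linarith [Nat.lt_floor_add_one t]
  calc f t ≤ f ⌊t⌋₊ + K * dist t ⌊t⌋₊ := hf.le_add_mul _ _
    _ ≤ g ⌊t⌋₊ + K * 1 := by gcongr; exact hN _ (Nat.le_floor ht)
    _ ≤ g t + K := by rw [mul_one]; gcongr; exact hg (Nat.floor_le ht₀)

lemma limsup_div_le_one_of_eventually_le_add {α : Type*} {l : Filter α} {f g : α → ℝ} {c : ℝ}
    (hg : Tendsto g l atTop) (h : ∀ᶠ x in l, f x ≤ g x + c) :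
    limsup (fun x => ((f x / g x : ℝ) : EReal)) l ≤ 1 := by
  rcases l.eq_or_neBot with rfl | hl
  · simp
  have hbound : ∀ᶠ x in l, ((f x / g x : ℝ) : EReal) ≤ ((1 + c / g x : ℝ) : EReal) := by
    filter_upwards [h, hg.eventually_gt_atTop 0] with x hx hgx
    rw [EReal.coe_le_coe_iff, div_le_iff₀ hgx, add_mul, one_mul, div_mul_cancel₀ _ hgx.ne']
    exact hx
  have hlim : Tendsto (fun x => ((1 + c / g x : ℝ) : EReal)) l (𝓝 1) := by
    have : Tendsto (fun x => 1 + c / g x) l (𝓝 (1 + 0)) :=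
      tendsto_const_nhds.add (tendsto_const_nhds.div_atTop hg)
    exact (continuous_coe_real_ereal.tendsto _).comp (by simpa using this)
  exact (limsup_le_limsup hbound).trans hlim.limsup_eq.le

theorem flow_log_law_upper_bound_general
    {Ω : Type*} [MeasurableSpace Ω] (μ : Measure Ω) [IsProbabilityMeasure μ]
    (T : ℝ → Ω → Ω) (hT : ∀ t : ℝ, MeasurePreserving (T t) μ μ)
    (Y : Ω → ℝ)
    (C r₀ : ℝ) (hC : 0 < C) (hr₀ : 0 < r₀)
    (htail : ∀ r : ℝ, r₀ ≤ r → μ {ω | Y ω > r} ≤ ENNReal.ofReal (C * Real.exp (-r) / r))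
    (K : NNReal) (hLip : ∀ ω : Ω, LipschitzWith K (fun t : ℝ => Y (T t ω))) :
    ∀ᵐ ω ∂μ,
      Filter.limsup (fun t : ℝ => ((Y (T t ω) / Real.sqrt (t / 4) : ℝ) : EReal))
        Filter.atTop ≤ (1 : EReal) := by
  have hsum := tsum_measure_gt_sqrt_ne_top μ Y hC.le hr₀ htail
  filter_upwards [ae_eventually_comp_le_of_tsum_ne_top (fun n => hT n) hsum]
    with ω hω
  have hsqrt_mono : Monotone fun t : ℝ => √(t / 4) := fun _ _ hst => sqrt_le_sqrt (by linarith)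
  exact limsup_div_le_one_of_eventually_le_add
    (tendsto_sqrt_atTop.comp (tendsto_id.atTop_div_const (by norm_num)))
    ((hLip ω).eventually_le_add_of_eventually_le_nat hsqrt_mono hω)

/-- **Logarithm law upper bound for a measure-preserving flow.** Let `(Ω, μ)` be a
probability space, `T t : Ω → Ω` a family of measure-preserving maps, and `Y : Ω → ℝ`
measurable with tail bound `μ {Y > r} ≤ C·e^{-r}/r` for `r ≥ r₀`. If for every `ω` the
map `t ↦ Y (T t ω)` is `K`-Lipschitz, then for `μ`-almost every `ω`,
`limsup_{t→∞} Y (T t ω) / √(t/4) ≤ 1`. -/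
theorem flow_log_law_upper_bound
    {Ω : Type*} [MeasurableSpace Ω] (μ : Measure Ω) [IsProbabilityMeasure μ]
    (T : ℝ → Ω → Ω) (hT : ∀ t : ℝ, MeasurePreserving (T t) μ μ)
    (Y : Ω → ℝ) (hY : Measurable Y)
    (C r₀ : ℝ) (hC : 0 < C) (hr₀ : 0 < r₀)
    (htail : ∀ r : ℝ, r₀ ≤ r → μ {ω | Y ω > r} ≤ ENNReal.ofReal (C * Real.exp (-r) / r))
    (K : NNReal) (hLip : ∀ ω : Ω, LipschitzWith K (fun t : ℝ => Y (T t ω))) :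
    ∀ᵐ ω ∂μ,
      Filter.limsup (fun t : ℝ => ((Y (T t ω) / Real.sqrt (t / 4) : ℝ) : EReal))
        Filter.atTop ≤ (1 : EReal) :=
  flow_log_law_upper_bound_general μ T hT Y C r₀ hC hr₀ htail K hLip
end

section
/- Define R : (0,∞) → ℝ by R(x) = 2·log((e^{x/2}+1)/(e^{x/2}−1)). Fix q > 0 and let a : ℝ → ℝ be a function such that a(L) > 0 and q·R(a(L)) < L < q·R(a(L)) + q·a(L)/2 for all sufficiently large L, and such that a(L) → 0 as L → ∞. Then lim_{L→∞} a(L)·e^{L/(2q)} = 4. -/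
open Filter

/-- The collar (injectivity-radius) function of a simple closed geodesic of length `x`
on a hyperbolic once-punctured torus: `R x = 2·log((e^{x/2}+1)/(e^{x/2}-1))`. -/
noncomputable def collarRadius (x : ℝ) : ℝ :=
  2 * Real.log ((Real.exp (x / 2) + 1) / (Real.exp (x / 2) - 1))

/-!
Since `exp (R x / 2) = (e^{x/2}+1)/(e^{x/2}-1)`, the function `x ↦ x · exp (R x / 2)` tends to
`2 · 2 = 4` as `x → 0⁺`. Dividing the hypothesis `q R(a) < L < q R(a) + q a / 2` by `2q` and
exponentiating squeezes `a L · e^{L/(2q)}` between `a · exp (R a / 2)` and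
`a · exp (R a / 2) · e^{a/4}`, and both bounds tend to `4`.
-/

open Real Topology

lemma tendsto_exp_sub_one_div : Tendsto (fun y : ℝ => (exp y - 1) / y) (𝓝[≠] 0) (𝓝 1) := by
  have h := hasDerivAt_iff_tendsto_slope.mp (hasDerivAt_exp 0)
  rw [exp_zero] at h
  exact h.congr fun y => by simp [slope_def_field]

lemma exp_half_collarRadius {x : ℝ} (hx : 0 < x) :
    exp (collarRadius x / 2) = (exp (x / 2) + 1) / (exp (x / 2) - 1) := by
  have hE : 1 < exp (x / 2) := one_lt_exp_iff.mpr (by positivity)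
  rw [collarRadius, mul_div_cancel_left₀ _ two_ne_zero, exp_log]
  exact div_pos (by linarith) (by linarith)

lemma tendsto_mul_exp_half_collarRadius :
    Tendsto (fun x => x * exp (collarRadius x / 2)) (𝓝[>] 0) (𝓝 4) := by
  have hhalf : Tendsto (fun x : ℝ => x / 2) (𝓝[>] 0) (𝓝[≠] 0) := by
    simpa using (continuous_id.div_const (2 : ℝ)).continuousWithinAt.tendsto_nhdsWithin
      (x := 0) (s := Set.Ioi 0) fun y (hy : 0 < y) => (half_pos hy).ne'
  have hslope : Tendsto (fun x : ℝ => (exp (x / 2) - 1) / (x / 2)) (𝓝[>] 0) (𝓝 1) :=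
    tendsto_exp_sub_one_div.comp hhalf
  have hnum : Tendsto (fun x : ℝ => exp (x / 2) + 1) (𝓝[>] 0) (𝓝 2) :=
    tendsto_nhdsWithin_of_tendsto_nhds <| ((continuous_exp.comp (continuous_id.div_const 2)).add
      (continuous_const (y := (1 : ℝ)))).tendsto' 0 2 (by norm_num)
  have hlim := (hnum.const_mul 2).div hslope one_ne_zero
  rw [mul_two, div_one, show (2 : ℝ) + 2 = 4 by norm_num] at hlim
  refine hlim.congr' ?_
  filter_upwards [self_mem_nhdsWithin] with x (hx : 0 < x)
  rw [Pi.div_apply, exp_half_collarRadius hx]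
  field_simp

/-- **Asymptotics of the systole estimate.** Fix `q > 0`. If `a : ℝ → ℝ` satisfies
`a L > 0` and `q·R(a L) < L < q·R(a L) + q·(a L)/2` for all sufficiently large `L`, and
`a L → 0` as `L → ∞`, then `a L · e^{L/(2q)} → 4`. -/
theorem systole_asymptotic_four
    (q : ℝ) (hq : 0 < q) (a : ℝ → ℝ)
    (ha : ∀ᶠ L in Filter.atTop,
      0 < a L ∧ q * collarRadius (a L) < L ∧ L < q * collarRadius (a L) + q * a L / 2)
    (ha0 : Filter.Tendsto a Filter.atTop (nhds 0)) :
    Filter.Tendsto (fun L : ℝ => a L * Real.exp (L / (2 * q))) Filter.atTop (nhds 4) := by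
  have ha0' : Tendsto a atTop (𝓝[>] 0) :=
    tendsto_nhdsWithin_iff.mpr ⟨ha0, ha.mono fun _ h => h.1⟩
  have hlower := tendsto_mul_exp_half_collarRadius.comp ha0'
  have hupper : Tendsto (fun L => a L * exp (collarRadius (a L) / 2) * exp (a L / 4))
      atTop (𝓝 4) := by
    have hexp := (continuous_exp.tendsto' 0 1 exp_zero).comp (zero_div (4 : ℝ) ▸ ha0.div_const 4)
    simpa using hlower.mul hexp
  refine tendsto_of_tendsto_of_tendsto_of_le_of_le' hlower hupper ?_ ?_
  · filter_upwards [ha] with L ⟨hpos, hR, _⟩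
    dsimp only [Function.comp_apply]
    gcongr _ * exp ?_
    rw [le_div_iff₀ (by positivity)]
    linarith
  · filter_upwards [ha] with L ⟨hpos, _, hR⟩
    rw [mul_assoc, ← exp_add]
    gcongr _ * exp ?_
    rw [div_le_iff₀ (by positivity)]
    linarith
end
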